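/- arXiv:2411.18989 — 3 statements merged into one kernel-verified Lean document; each statement's English description precedes it below -/
import Mathlib

section
/- Let (K, k, k**) define a joint Gaussian with block covariance [[k**, kᵀ],[k, K]] where K ∈ ℝ^{n×n} is positive definite. Let O be an orthogonal D×D matrix. If one replaces the data vector y ∈ ℝ^{nD} by (I_n ⊗ Oᵀ) y in the coregionalization model with Gram matrix K ⊗ B replaced by K ⊗ (Oᵀ B O), then the posterior mean β and posterior covariance Σ transform as β ↦ Oᵀ β and Σ ↦ Oᵀ Σ O. In particular the frame-independent quantities Eᵀβ and EᵀΣE are invariant under the frame change E ↦ Oᵀ E. -/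
open Matrix
open scoped Kronecker

noncomputable section

/-- The `D × nD` matrix `k*ᵀ ⊗ B` of the coregionalization model. -/
def coregCross {n D : ℕ} (kstar : Fin n → ℝ) (B : Matrix (Fin D) (Fin D) ℝ) :
    Matrix (Fin D) (Fin n × Fin D) ℝ :=
  Matrix.of fun d p => kstar p.1 * B d p.2

/-- Posterior mean `β = (k*ᵀ ⊗ B)(K ⊗ B)⁻¹ y` of the coregionalization GP model. -/
def coregMean {n D : ℕ} (K : Matrix (Fin n) (Fin n) ℝ) (B : Matrix (Fin D) (Fin D) ℝ)
    (kstar : Fin n → ℝ) (y : Fin n × Fin D → ℝ) : Fin D → ℝ :=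
  (coregCross kstar B).mulVec ((K ⊗ₖ B)⁻¹.mulVec y)

/-- Posterior covariance `Σ = k**·B − (k*ᵀ ⊗ B)(K ⊗ B)⁻¹(k*ᵀ ⊗ B)ᵀ`. -/
def coregCov {n D : ℕ} (K : Matrix (Fin n) (Fin n) ℝ) (B : Matrix (Fin D) (Fin D) ℝ)
    (kstar : Fin n → ℝ) (kss : ℝ) : Matrix (Fin D) (Fin D) ℝ :=
  kss • B - coregCross kstar B * (K ⊗ₖ B)⁻¹ * (coregCross kstar B)ᵀ

/-! An orthogonal change of frame `O` acts on the output index of the model as `(I ⊗ O)`, which is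
again orthogonal. Hence `K ⊗ OᵀBO = (I ⊗ O)ᵀ (K ⊗ B) (I ⊗ O)` has inverse `(I ⊗ O)ᵀ (K ⊗ B)⁻¹ (I ⊗ O)`,
the cross-covariance becomes `Oᵀ (k*ᵀ ⊗ B) (I ⊗ O)`, and in the formulas for `β` and `Σ` the
inner factors `(I ⊗ O)(I ⊗ O)ᵀ` cancel, leaving `Oᵀ β` and `Oᵀ Σ O`. Since `O Oᵀ = 1`, the
coefficients `Oᵀ β` in the frame `Oᵀ E` describe the same vector as `β` in the frame `E`. -/

section Orthogonal

variable {m n R : Type*} [CommRing R]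

theorem Matrix.inv_transpose_mul_mul_of_transpose_mul_self [Fintype m] [DecidableEq m]
    {U : Matrix m m R} (hU : Uᵀ * U = 1) (A : Matrix m m R) :
    (Uᵀ * A * U)⁻¹ = Uᵀ * A⁻¹ * U := by
  rw [Matrix.mul_inv_rev, Matrix.mul_inv_rev, inv_eq_left_inv hU,
    inv_eq_left_inv (mul_eq_one_comm.mp hU), Matrix.mul_assoc]

theorem Matrix.mul_mul_inv_transpose_mul_mul_mul_transpose [Fintype m] [DecidableEq m] {l : Type*}
    {P : Matrix m m R} (hP : Pᵀ * P = 1) (C : Matrix l m R) (G : Matrix m m R) :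
    C * P * (Pᵀ * G * P)⁻¹ * Pᵀ = C * G⁻¹ := by
  rw [inv_transpose_mul_mul_of_transpose_mul_self hP, ← Matrix.mul_assoc, ← Matrix.mul_assoc,
    Matrix.mul_assoc C, mul_eq_one_comm.mp hP, Matrix.mul_one, Matrix.mul_assoc,
    mul_eq_one_comm.mp hP, Matrix.mul_one]

theorem Matrix.transpose_one_kronecker [DecidableEq n] (U : Matrix m m R) :
    ((1 : Matrix n n R) ⊗ₖ U)ᵀ = (1 : Matrix n n R) ⊗ₖ Uᵀ := by
  rw [← kroneckerMap_transpose, transpose_one]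

theorem Matrix.transpose_one_kronecker_mul_self [Fintype m] [Fintype n] [DecidableEq m]
    [DecidableEq n] {U : Matrix m m R} (hU : Uᵀ * U = 1) :
    ((1 : Matrix n n R) ⊗ₖ U)ᵀ * ((1 : Matrix n n R) ⊗ₖ U) = 1 := by
  rw [transpose_one_kronecker, ← mul_kronecker_mul, Matrix.one_mul, hU, one_kronecker_one]

theorem Matrix.kronecker_transpose_mul_mul [Fintype m] [Fintype n] [DecidableEq n]
    (K : Matrix n n R) (A U : Matrix m m R) :
    K ⊗ₖ (Uᵀ * A * U) = ((1 : Matrix n n R) ⊗ₖ U)ᵀ * (K ⊗ₖ A) * ((1 : Matrix n n R) ⊗ₖ U) := by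
  rw [transpose_one_kronecker, ← mul_kronecker_mul, ← mul_kronecker_mul, Matrix.one_mul,
    Matrix.mul_one]

theorem Matrix.one_kronecker_mulVec_apply [Fintype m] [Fintype n] [DecidableEq n]
    (U : Matrix m m R) (y : n × m → R) (p : n × m) :
    ((1 : Matrix n n R) ⊗ₖ U *ᵥ y) p = ∑ e, U p.2 e * y (p.1, e) := by
  simp [mulVec, dotProduct, Fintype.sum_prod_type, one_apply, ite_mul]

end Orthogonal

theorem Matrix.sum_smul_sum_smul {m R V : Type*} [Fintype m] [CommSemiring R] [AddCommMonoid V]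
    [Module R V] (v : m → R) (M : Matrix m m R) (E : m → V) :
    ∑ d, v d • ∑ e, M d e • E e = ∑ e, (v ᵥ* M) e • E e := by
  simp only [Finset.smul_sum, smul_smul, vecMul, dotProduct, Finset.sum_smul]
  exact Finset.sum_comm

section Coregionalization

variable {n D : ℕ}

theorem mul_coregCross (kstar : Fin n → ℝ) (P B : Matrix (Fin D) (Fin D) ℝ) :
    P * coregCross kstar B = coregCross kstar (P * B) := by
  ext d p
  simp only [coregCross, mul_apply, of_apply, Finset.mul_sum]
  exact Finset.sum_congr rfl fun _ _ => by ring

theorem coregCross_mul_one_kronecker (kstar : Fin n → ℝ) (B Q : Matrix (Fin D) (Fin D) ℝ) :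
    coregCross kstar B * ((1 : Matrix (Fin n) (Fin n) ℝ) ⊗ₖ Q) = coregCross kstar (B * Q) := by
  ext d p
  simp [coregCross, mul_apply, Fintype.sum_prod_type, one_apply, Finset.mul_sum, mul_assoc]

theorem coregCross_transpose_mul_mul (kstar : Fin n → ℝ) (B O : Matrix (Fin D) (Fin D) ℝ) :
    coregCross kstar (Oᵀ * B * O) =
      Oᵀ * coregCross kstar B * ((1 : Matrix (Fin n) (Fin n) ℝ) ⊗ₖ O) := by
  rw [mul_coregCross, coregCross_mul_one_kronecker]

variable (K : Matrix (Fin n) (Fin n) ℝ) (kstar : Fin n → ℝ) {O : Matrix (Fin D) (Fin D) ℝ}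
  (B : Matrix (Fin D) (Fin D) ℝ)

theorem coregMean_transpose_mul_mul (hO : Oᵀ * O = 1) (y : Fin n × Fin D → ℝ) :
    coregMean K (Oᵀ * B * O) kstar (((1 : Matrix (Fin n) (Fin n) ℝ) ⊗ₖ Oᵀ) *ᵥ y) =
      Oᵀ *ᵥ coregMean K B kstar y := by
  rw [← transpose_one_kronecker, coregMean, coregMean, coregCross_transpose_mul_mul,
    kronecker_transpose_mul_mul, mulVec_mulVec, mulVec_mulVec,
    mul_mul_inv_transpose_mul_mul_mul_transpose (transpose_one_kronecker_mul_self hO)]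
  simp only [mulVec_mulVec, Matrix.mul_assoc]

theorem coregCov_transpose_mul_mul (hO : Oᵀ * O = 1) (kss : ℝ) :
    coregCov K (Oᵀ * B * O) kstar kss = Oᵀ * coregCov K B kstar kss * O := by
  simp only [coregCov, coregCross_transpose_mul_mul, kronecker_transpose_mul_mul, transpose_mul,
    transpose_transpose, ← Matrix.mul_assoc,
    mul_mul_inv_transpose_mul_mul_mul_transpose (transpose_one_kronecker_mul_self hO),
    Matrix.mul_sub, Matrix.sub_mul, Matrix.mul_smul, Matrix.smul_mul]

end Coregionalization

theorem coreg_frame_invariance_general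
    {n D : ℕ} (K : Matrix (Fin n) (Fin n) ℝ)
    (B : Matrix (Fin D) (Fin D) ℝ)
    (kstar : Fin n → ℝ) (kss : ℝ) (y : Fin n × Fin D → ℝ)
    (O : Matrix (Fin D) (Fin D) ℝ) (hO : Oᵀ * O = 1)
    {V : Type*} [AddCommGroup V] [Module ℝ V] (E : Fin D → V) :
    coregMean K (Oᵀ * B * O) kstar (fun p => ∑ e, Oᵀ p.2 e * y (p.1, e)) =
        Oᵀ.mulVec (coregMean K B kstar y) ∧
      coregCov K (Oᵀ * B * O) kstar kss = Oᵀ * coregCov K B kstar kss * O ∧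
      ∑ d, coregMean K (Oᵀ * B * O) kstar (fun p => ∑ e, Oᵀ p.2 e * y (p.1, e)) d •
          (∑ e, Oᵀ d e • E e) =
        ∑ d, coregMean K B kstar y d • E d := by
  have hy : (fun p => ∑ e, Oᵀ p.2 e * y (p.1, e)) = (1 : Matrix (Fin n) (Fin n) ℝ) ⊗ₖ Oᵀ *ᵥ y :=
    funext fun p => (one_kronecker_mulVec_apply Oᵀ y p).symm
  rw [hy, coregMean_transpose_mul_mul K kstar B hO y]
  refine ⟨rfl, coregCov_transpose_mul_mul K kstar B hO kss, ?_⟩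
  rw [sum_smul_sum_smul, vecMul_transpose, mulVec_mulVec, mul_eq_one_comm.mp hO, one_mulVec]

/-- Frame invariance (Theorem 3): replacing the data `y` by `(I_n ⊗ Oᵀ) y` and the
coregionalization matrix `B` by `Oᵀ B O`, for an orthogonal matrix `O`, transforms the
posterior mean by `β ↦ Oᵀ β` and the posterior covariance by `Σ ↦ Oᵀ Σ O`; consequently
the frame-independent tangent vector `Eᵀβ = ∑ d, β d • E d` is invariant under the frame
change `E ↦ Oᵀ E`. -/
theorem coreg_frame_invariance
    {n D : ℕ} (K : Matrix (Fin n) (Fin n) ℝ) (hK : K.PosDef)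
    (B : Matrix (Fin D) (Fin D) ℝ) (hB : B.PosDef)
    (kstar : Fin n → ℝ) (kss : ℝ) (y : Fin n × Fin D → ℝ)
    (O : Matrix (Fin D) (Fin D) ℝ) (hO : Oᵀ * O = 1)
    {V : Type*} [AddCommGroup V] [Module ℝ V] (E : Fin D → V) :
    coregMean K (Oᵀ * B * O) kstar (fun p => ∑ e, Oᵀ p.2 e * y (p.1, e)) =
        Oᵀ.mulVec (coregMean K B kstar y) ∧
      coregCov K (Oᵀ * B * O) kstar kss = Oᵀ * coregCov K B kstar kss * O ∧
      ∑ d, coregMean K (Oᵀ * B * O) kstar (fun p => ∑ e, Oᵀ p.2 e * y (p.1, e)) d •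
          (∑ e, Oᵀ d e • E e) =
        ∑ d, coregMean K B kstar y d • E d :=
  coreg_frame_invariance_general K B kstar kss y O hO E

end
end

section
/- The posterior predictive variance in GP regression is monotonically nonincreasing in the data: for σ² > 0 and a psd kernel k, adding an extra training point x_{n+1} cannot increase the posterior variance at any test point x*, i.e., k(x*,x*) − k_{n+1}*ᵀ (K_{n+1} + σ²I)⁻¹ k_{n+1}* ≤ k(x*,x*) − k_n*ᵀ (K_n + σ²I)⁻¹ k_n*. -/
/-!
For a positive definite `A`, `v ⬝ A⁻¹ v` is the maximum of `2 w ⬝ v - w ⬝ A w` over all `w`.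
With the first `n` points, the data term of the posterior variance is this maximum for the
principal submatrix of `K_{n+1} + σ² I` on those points, which is the maximum for
`K_{n+1} + σ² I` itself over the `w` vanishing at the new point. A maximum over fewer `w` is
smaller, so the subtracted term grows with the data.
-/

open Matrix Function

namespace Matrix

variable {l m n α : Type*} [Fintype m] [Fintype n]

section ExtendByZero

variable [CommSemiring α] {e : n → m}

theorem extend_zero_dotProduct (he : Injective e) (w : n → α) (v : m → α) :
    extend e w 0 ⬝ᵥ v = w ⬝ᵥ (v ∘ e) :=
  (Fintype.sum_of_injective e he _ _
    (fun i hi ↦ by simp [extend_apply' _ _ _ (by simpa using hi)])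
    (fun j ↦ by simp [he.extend_apply])).symm

theorem mulVec_extend_zero (he : Injective e) (A : Matrix l m α) (w : n → α) :
    A *ᵥ extend e w 0 = A.submatrix id e *ᵥ w := by
  ext i
  rw [mulVec, dotProduct_comm, extend_zero_dotProduct he, dotProduct_comm]
  rfl

theorem extend_zero_dotProduct_mulVec (he : Injective e) (A : Matrix m m α) (w : n → α) :
    extend e w 0 ⬝ᵥ A *ᵥ extend e w 0 = w ⬝ᵥ A.submatrix e e *ᵥ w := by
  rw [extend_zero_dotProduct he, mulVec_extend_zero he]
  rfl

end ExtendByZero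

namespace PosDef

variable [DecidableEq m] [DecidableEq n]

/-- Completing the square: `2 w ⬝ v - w ⬝ A w = v ⬝ A⁻¹ v - (w - A⁻¹ v) ⬝ A (w - A⁻¹ v)`. -/
theorem isGreatest_inv_quadratic {A : Matrix n n ℝ} (hA : A.PosDef) (v : n → ℝ) :
    IsGreatest (Set.range fun w ↦ 2 * (w ⬝ᵥ v) - w ⬝ᵥ A *ᵥ w) (v ⬝ᵥ A⁻¹ *ᵥ v) := by
  have hAinv : A *ᵥ (A⁻¹ *ᵥ v) = v := by
    rw [mulVec_mulVec, mul_nonsing_inv _ ((isUnit_iff_isUnit_det A).mp hA.isUnit), one_mulVec]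
  refine ⟨⟨A⁻¹ *ᵥ v, ?_⟩, ?_⟩
  · simp only [hAinv, dotProduct_comm (A⁻¹ *ᵥ v) v]
    ring
  · rintro _ ⟨w, rfl⟩
    set p := A⁻¹ *ᵥ v
    have hsymm : w ⬝ᵥ A *ᵥ p = p ⬝ᵥ A *ᵥ w := by
      rw [dotProduct_mulVec, ← mulVec_transpose, dotProduct_comm,
        (by simpa using hA.isHermitian.eq : Aᵀ = A)]
    have hsq := hA.posSemidef.dotProduct_mulVec_nonneg (w - p)
    simp only [star_trivial, mulVec_sub, dotProduct_sub, sub_dotProduct, hAinv] at hsq ⊢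
    rw [hAinv] at hsymm
    rw [dotProduct_comm p v] at hsq
    linarith [hsymm, dotProduct_comm w v]

theorem dotProduct_submatrix_inv_mulVec_le {A : Matrix m m ℝ} (hA : A.PosDef) {e : n → m}
    (he : Injective e) (v : m → ℝ) :
    (v ∘ e) ⬝ᵥ (A.submatrix e e)⁻¹ *ᵥ (v ∘ e) ≤ v ⬝ᵥ A⁻¹ *ᵥ v := by
  obtain ⟨⟨w, hw⟩, -⟩ := (hA.submatrix he).isGreatest_inv_quadratic (v ∘ e)
  dsimp only at hw
  rw [← hw, ← extend_zero_dotProduct he, ← extend_zero_dotProduct_mulVec he]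
  exact (hA.isGreatest_inv_quadratic v).2 ⟨_, rfl⟩

end PosDef

end Matrix

theorem posterior_variance_antitone_general
    {X : Type*} (k : X → X → ℝ)
    (hpsd : ∀ (m : ℕ) (x : Fin m → X),
      (Matrix.of fun i j => k (x i) (x j) : Matrix (Fin m) (Fin m) ℝ).PosSemidef)
    (σ2 : ℝ) (hσ : 0 < σ2)
    (n : ℕ) (x : Fin (n + 1) → X) (xstar : X) :
    k xstar xstar -
        (fun i : Fin (n + 1) => k xstar (x i)) ⬝ᵥ
          ((Matrix.of fun i j => k (x i) (x j) : Matrix (Fin (n + 1)) (Fin (n + 1)) ℝ)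
              + σ2 • 1)⁻¹.mulVec (fun i => k xstar (x i)) ≤
      k xstar xstar -
        (fun i : Fin n => k xstar (x i.castSucc)) ⬝ᵥ
          ((Matrix.of fun i j => k (x i.castSucc) (x j.castSucc) : Matrix (Fin n) (Fin n) ℝ)
              + σ2 • 1)⁻¹.mulVec (fun i => k xstar (x i.castSucc)) := by
  have hreg : ((Matrix.of fun i j => k (x i) (x j)) + σ2 • (1 : Matrix _ _ ℝ)).PosDef :=
    PosDef.posSemidef_add (hpsd _ x) (PosDef.one.smul hσ)
  have hrestrict := hreg.dotProduct_submatrix_inv_mulVec_le (Fin.castSucc_injective n)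
    (fun i => k xstar (x i))
  simp only [submatrix_add, submatrix_smul, Pi.add_apply, Pi.smul_apply,
    submatrix_one _ (Fin.castSucc_injective n)] at hrestrict
  exact sub_le_sub_left hrestrict _

/-- Monotonicity of the GP posterior predictive variance in the data: adding an
extra training point cannot increase the posterior variance at any test point. -/
theorem posterior_variance_antitone
    {X : Type*} (k : X → X → ℝ)
    (hsymm : ∀ x y, k x y = k y x)
    (hpsd : ∀ (m : ℕ) (x : Fin m → X),
      (Matrix.of fun i j => k (x i) (x j) : Matrix (Fin m) (Fin m) ℝ).PosSemidef)
    (σ2 : ℝ) (hσ : 0 < σ2)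
    (n : ℕ) (x : Fin (n + 1) → X) (xstar : X) :
    k xstar xstar -
        (fun i : Fin (n + 1) => k xstar (x i)) ⬝ᵥ
          ((Matrix.of fun i j => k (x i) (x j) : Matrix (Fin (n + 1)) (Fin (n + 1)) ℝ)
              + σ2 • 1)⁻¹.mulVec (fun i => k xstar (x i)) ≤
      k xstar xstar -
        (fun i : Fin n => k xstar (x i.castSucc)) ⬝ᵥ
          ((Matrix.of fun i j => k (x i.castSucc) (x j.castSucc) : Matrix (Fin n) (Fin n) ℝ)
              + σ2 • 1)⁻¹.mulVec (fun i => k xstar (x i.castSucc)) :=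
  posterior_variance_antitone_general k hpsd σ2 hσ n x xstar
end

section
/- Let k be a bounded symmetric positive semidefinite kernel on X with associated RKHS H, and fix points x₁,…,xₙ and a test point x*. The posterior variance v(x*) = k(x*,x*) − k*ᵀ(K+σ²I)⁻¹k* equals the squared distance, in the norm ‖h‖² = ‖h‖_H² + σ⁻²Σᵢ h(xᵢ)², from k(x*,·) to the span of an appropriate finite-dimensional subspace; in particular 0 ≤ v(x*) ≤ k(x*,x*). -/
/-!
Adding the noise `σ² I` to the `x`-block of the Gram matrix of `(x*, x₁, …, xₙ)` keeps it positive
semidefinite, and the Schur complement of the positive definite block `K + σ² I` in it is the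
`1 × 1` matrix `k(x*,x*) − k*ᵀ (K + σ² I)⁻¹ k*`, which is therefore nonnegative. The upper bound
holds because `(K + σ² I)⁻¹` is positive definite.
-/

open Matrix

theorem Matrix.dotProduct_inv_mulVec_le_of_posSemidef_fromBlocks {n : Type*} [Fintype n]
    [DecidableEq n] {a : ℝ} {b : n → ℝ} {D : Matrix n n ℝ} (hD : D.PosDef)
    (h : (fromBlocks (of fun _ _ => a) (replicateRow Unit b) (replicateCol Unit b) D).PosSemidef) :
    b ⬝ᵥ D⁻¹ *ᵥ b ≤ a := by
  have := hD.isUnit.invertible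
  have hB : replicateCol Unit b = (replicateRow Unit b)ᴴ := by
    rw [conjTranspose_replicateRow, star_trivial]
  rw [hB, PosDef.fromBlocks₂₂ _ _ hD] at h
  have hschur := h.diag_nonneg (i := ())
  rwa [sub_apply, Matrix.mul_assoc, ← hB, ← replicateCol_mulVec,
    replicateRow_mul_replicateCol_apply, of_apply, sub_nonneg] at hschur

section Kernel

variable {X : Type*} {k : X → X → ℝ}

theorem kernel_gram_posSemidef {ι : Type*} [Fintype ι]
    (hpsd : ∀ (m : ℕ) (x : Fin m → X),
      (of fun i j => k (x i) (x j) : Matrix (Fin m) (Fin m) ℝ).PosSemidef)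
    (y : ι → X) : (of fun i j => k (y i) (y j) : Matrix ι ι ℝ).PosSemidef := by
  convert (hpsd _ (y ∘ (Fintype.equivFin ι).symm)).submatrix (Fintype.equivFin ι) using 1
  ext; simp

theorem posSemidef_fromBlocks_kernel_gram_add_smul_one {ι : Type*} [Fintype ι] [DecidableEq ι]
    (hsymm : ∀ x y, k x y = k y x)
    (hpsd : ∀ (m : ℕ) (x : Fin m → X),
      (of fun i j => k (x i) (x j) : Matrix (Fin m) (Fin m) ℝ).PosSemidef)
    {σ2 : ℝ} (hσ : 0 ≤ σ2) (x : ι → X) (xstar : X) :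
    (fromBlocks (of fun _ _ => k xstar xstar) (replicateRow Unit fun i => k xstar (x i))
      (replicateCol Unit fun i => k xstar (x i))
      ((of fun i j => k (x i) (x j)) + σ2 • 1)).PosSemidef := by
  have hnoise : (diagonal (0 ⊕ᵥ fun _ => σ2) : Matrix (Unit ⊕ ι) (Unit ⊕ ι) ℝ).PosSemidef :=
    posSemidef_diagonal_iff.mpr (by simp [Sum.forall, hσ])
  convert (kernel_gram_posSemidef hpsd (Sum.elim (fun _ => xstar) x)).add hnoise using 1
  ext (_ | i) (_ | j) <;> simp [hsymm, diagonal, one_apply]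

end Kernel

theorem posterior_variance_two_sided_bound_general
    {X : Type*} (k : X → X → ℝ)
    (hsymm : ∀ x y, k x y = k y x)
    (hpsd : ∀ (m : ℕ) (x : Fin m → X),
      (Matrix.of fun i j => k (x i) (x j) : Matrix (Fin m) (Fin m) ℝ).PosSemidef)
    (σ2 : ℝ) (hσ : 0 < σ2)
    (n : ℕ) (x : Fin n → X) (xstar : X) :
    0 ≤ k xstar xstar -
        (fun i => k xstar (x i)) ⬝ᵥ
          ((Matrix.of fun i j => k (x i) (x j) : Matrix (Fin n) (Fin n) ℝ)
              + σ2 • 1)⁻¹.mulVec (fun i => k xstar (x i)) ∧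
      k xstar xstar -
        (fun i => k xstar (x i)) ⬝ᵥ
          ((Matrix.of fun i j => k (x i) (x j) : Matrix (Fin n) (Fin n) ℝ)
              + σ2 • 1)⁻¹.mulVec (fun i => k xstar (x i)) ≤ k xstar xstar := by
  have hD : ((of fun i j => k (x i) (x j) : Matrix (Fin n) (Fin n) ℝ) + σ2 • 1).PosDef :=
    PosDef.posSemidef_add (hpsd n x) (PosDef.one.smul hσ)
  constructor
  · exact sub_nonneg.mpr <| dotProduct_inv_mulVec_le_of_posSemidef_fromBlocks hD <|
      posSemidef_fromBlocks_kernel_gram_add_smul_one hsymm hpsd hσ.le x xstar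
  · simpa using hD.inv.posSemidef.dotProduct_mulVec_nonneg fun i => k xstar (x i)

/-- Two-sided bound on the GP posterior predictive variance: for a bounded symmetric
positive semidefinite kernel `k`, training points `x₁, …, xₙ`, test point `x*` and
noise variance `σ² > 0`, one has
`0 ≤ k(x*,x*) − k*ᵀ (K + σ²I)⁻¹ k* ≤ k(x*,x*)`. -/
theorem posterior_variance_two_sided_bound
    {X : Type*} (k : X → X → ℝ) (M : ℝ)
    (hbdd : ∀ x y, |k x y| ≤ M)
    (hsymm : ∀ x y, k x y = k y x)
    (hpsd : ∀ (m : ℕ) (x : Fin m → X),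
      (Matrix.of fun i j => k (x i) (x j) : Matrix (Fin m) (Fin m) ℝ).PosSemidef)
    (σ2 : ℝ) (hσ : 0 < σ2)
    (n : ℕ) (x : Fin n → X) (xstar : X) :
    0 ≤ k xstar xstar -
        (fun i => k xstar (x i)) ⬝ᵥ
          ((Matrix.of fun i j => k (x i) (x j) : Matrix (Fin n) (Fin n) ℝ)
              + σ2 • 1)⁻¹.mulVec (fun i => k xstar (x i)) ∧
      k xstar xstar -
        (fun i => k xstar (x i)) ⬝ᵥ
          ((Matrix.of fun i j => k (x i) (x j) : Matrix (Fin n) (Fin n) ℝ)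
              + σ2 • 1)⁻¹.mulVec (fun i => k xstar (x i)) ≤ k xstar xstar :=
  posterior_variance_two_sided_bound_general k hsymm hpsd σ2 hσ n x xstar
end
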